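/- arXiv:1603.04187 — 5 statements merged into one kernel-verified Lean document; each statement's English description precedes it below -/
import Mathlib

section
/- Let A be an integral domain, σ an injective ring endomorphism of A, and B a subring of A with σ(B) ⊆ B; let L be the field of fractions of B (viewed inside the field of fractions of A) and write σ also for the induced endomorphism of L. Let f_1, …, f_n be non-zero elements of A satisfying a non-trivial polynomial relation of total degree at most d with coefficients in L, and suppose there exist a_1, …, a_n ∈ B with f_i = a_i · σ(f_i) for all i. Then there exist integers m_1, …, m_n, not all zero, and r ∈ L* such that a_1^{m_1} ⋯ a_n^{m_n} = σ(r)/r, and moreover |m_1 + ⋯ + m_n| ≤ d and |m_i| ≤ d for every i. -/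
/-- **Kolchin-type proposition.** Let `A` be an integral domain with fraction
field `F`, `σ` an injective ring endomorphism of `A`, and `B` a subring of `A` with
`σ(B) ⊆ B`; let `L ⊆ F` be the field of fractions of `B` (the subfield of `F` generated by
the image of `B`). Suppose the nonzero elements `f₁, …, fₙ` of `A` satisfy a non-trivial
polynomial relation `P(f₁,…,fₙ) = 0` of total degree at most `d` with coefficients in `L`,
and `fᵢ = aᵢ·σ(fᵢ)` with `aᵢ ∈ B`. Then there are integers `m₁, …, mₙ`, not all zero, with
`|m₁ + ⋯ + mₙ| ≤ d`, `|mᵢ| ≤ d`, and a nonzero `r = b₁/b₂ ∈ L*` (with `b₁, b₂ ∈ B` nonzero)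
such that `a₁^{m₁} ⋯ aₙ^{mₙ} = σ(r)/r = (σ(b₁)·b₂)/(σ(b₂)·b₁)` in `F`. -/
theorem kolchin_like
    {A F : Type} [CommRing A] [IsDomain A] [Field F] [Algebra A F] [IsFractionRing A F]
    (σ : A →+* A) (hσ : Function.Injective σ)
    (B : Subring A) (hσB : ∀ b ∈ B, σ b ∈ B)
    (L : Subfield F) (hL : L = Subfield.closure (algebraMap A F '' (B : Set A)))
    {n d : ℕ} (f a : Fin n → A)
    (hf0 : ∀ i, f i ≠ 0) (haB : ∀ i, a i ∈ B)
    (hfa : ∀ i, f i = a i * σ (f i))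
    (P : MvPolynomial (Fin n) F) (hP0 : P ≠ 0) (hPdeg : P.totalDegree ≤ d)
    (hPL : ∀ m, MvPolynomial.coeff m P ∈ L)
    (hPf : MvPolynomial.eval (fun i => algebraMap A F (f i)) P = 0) :
    ∃ m : Fin n → ℤ, m ≠ 0 ∧ (∑ i, m i).natAbs ≤ d ∧ (∀ i, (m i).natAbs ≤ d) ∧
      ∃ b₁ b₂ : A, b₁ ∈ B ∧ b₂ ∈ B ∧ b₁ ≠ 0 ∧ b₂ ≠ 0 ∧
        ∏ i, (algebraMap A F (a i)) ^ (m i) =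
          (algebraMap A F (σ b₁) * algebraMap A F b₂) /
            (algebraMap A F (σ b₂) * algebraMap A F b₁) := by
  set ι : A →+* F := (algebraMap A F) with hι_def
  have hιinj : Function.Injective ι := IsFractionRing.injective A F
  have ha0 : ∀ i, a i ≠ 0 := fun i h => hf0 i (by rw [hfa i, h, zero_mul])
  -- the extension of σ to F
  have hginj : Function.Injective (ι.comp σ) := hιinj.comp hσ
  set σ' : F →+* F := IsFractionRing.lift hginj with hσ'_def
  have hσ'ι : ∀ x : A, σ' (ι x) = ι (σ x) := fun x => IsFractionRing.lift_algebraMap hginj x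
  have hσ'inj : Function.Injective σ' := σ'.injective
  -- σ' preserves L
  have hσ'L : ∀ x ∈ L, σ' x ∈ L := by
    intro x hx
    rw [hL] at hx ⊢
    induction hx using Subfield.closure_induction with
    | mem y hy =>
      obtain ⟨b, hb, rfl⟩ := hy
      rw [hσ'ι]
      exact Subfield.subset_closure ⟨σ b, hσB b hb, rfl⟩
    | one => rw [map_one]; exact one_mem _
    | add x y _ _ hx hy => rw [map_add]; exact add_mem hx hy
    | neg x _ hx => rw [map_neg]; exact neg_mem hx
    | inv x _ hx => rw [map_inv₀]; exact inv_mem hx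
    | mul x y _ _ hx hy => rw [map_mul]; exact mul_mem hx hy
  -- representation of nonzero elements of L as quotients from B
  have hrep : ∀ x ∈ L, x ≠ 0 →
      ∃ b₁ b₂ : A, b₁ ∈ B ∧ b₂ ∈ B ∧ b₁ ≠ 0 ∧ b₂ ≠ 0 ∧ x = ι b₁ / ι b₂ := by
    intro x hx hx0
    rw [hL, Subfield.mem_closure_iff] at hx
    obtain ⟨y, hy, z, hz, hyz⟩ := hx
    rw [← ι.map_closure, Subring.closure_eq] at hy hz
    obtain ⟨b₁, hb₁, rfl⟩ := hy
    obtain ⟨b₂, hb₂, rfl⟩ := hz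
    have hz0 : ι b₂ ≠ 0 := by
      intro h; rw [h, div_zero] at hyz; exact hx0 hyz.symm
    have hy0 : ι b₁ ≠ 0 := by
      intro h; rw [h, zero_div] at hyz; exact hx0 hyz.symm
    refine ⟨b₁, b₂, hb₁, hb₂, ?_, ?_, hyz.symm⟩
    · intro h; exact hy0 (by rw [h, map_zero])
    · intro h; exact hz0 (by rw [h, map_zero])
  have hι_a0 : ∀ i, ι (a i) ≠ 0 := fun i h => ha0 i (hιinj (by rw [h, map_zero]))
  have hι_f0 : ∀ i, ι (f i) ≠ 0 := fun i h => hf0 i (hιinj (by rw [h, map_zero]))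
  have haL : ∀ i, ι (a i) ∈ L := fun i => hL ▸ Subfield.subset_closure ⟨a i, haB i, rfl⟩
  have hdiv : ∀ i, ι (σ (f i)) = ι (f i) / ι (a i) := by
    intro i
    rw [eq_div_iff (hι_a0 i), ← map_mul, mul_comm]
    exact congrArg ι (hfa i).symm
  have hfac : ∀ i (e : ℕ), (ι (f i) / ι (a i)) ^ e = ι (f i) ^ e * ι (a i) ^ (-(e : ℤ)) := by
    intro i e
    rw [div_pow, zpow_neg, zpow_natCast, div_eq_mul_inv]
  -- main induction on the size of the support
  suffices H : ∀ k (P : MvPolynomial (Fin n) F), P.support.card ≤ k → P ≠ 0 →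
      P.totalDegree ≤ d → (∀ m, MvPolynomial.coeff m P ∈ L) →
      MvPolynomial.eval (fun i => ι (f i)) P = 0 →
      (∃ m : Fin n → ℤ, m ≠ 0 ∧ (∑ i, m i).natAbs ≤ d ∧ (∀ i, (m i).natAbs ≤ d) ∧
        ∃ b₁ b₂ : A, b₁ ∈ B ∧ b₂ ∈ B ∧ b₁ ≠ 0 ∧ b₂ ≠ 0 ∧
          ∏ i, (ι (a i)) ^ (m i) = (ι (σ b₁) * ι b₂) / (ι (σ b₂) * ι b₁)) by
    exact H P.support.card P le_rfl hP0 hPdeg hPL hPf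
  clear hP0 hPdeg hPL hPf P
  intro k
  induction k with
  | zero =>
    intro P hcard hP0 _ _ _
    exact absurd (MvPolynomial.support_eq_empty.mp (Finset.card_eq_zero.mp
      (Nat.le_zero.mp hcard))) hP0
  | succ k ih =>
    intro P hcard hP0 hPdeg hPL hPf
    obtain ⟨α, hα⟩ : P.support.Nonempty := by
      rwa [Finset.nonempty_iff_ne_empty, Ne, MvPolynomial.support_eq_empty]
    set c : (Fin n →₀ ℕ) → F :=
      fun γ => σ' (P.coeff γ) * ∏ i, (ι (a i)) ^ (-(γ i : ℤ)) with hc_def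
    have hc0 : ∀ γ ∈ P.support, c γ ≠ 0 := by
      intro γ hγ
      apply mul_ne_zero
      · intro h
        exact MvPolynomial.mem_support_iff.mp hγ (hσ'inj (by rw [h, map_zero]))
      · exact Finset.prod_ne_zero_iff.mpr fun i _ => zpow_ne_zero _ (hι_a0 i)
    have hcL : ∀ γ, c γ ∈ L := fun γ =>
      mul_mem (hσ'L _ (hPL γ)) (prod_mem fun i _ => L.zpow_mem (haL i) _)
    set Q : MvPolynomial (Fin n) F :=
      ∑ γ ∈ P.support, MvPolynomial.monomial γ (c γ) with hQ_def
    have hQcoeff : ∀ γ, Q.coeff γ = if γ ∈ P.support then c γ else 0 := by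
      intro γ
      rw [hQ_def, MvPolynomial.coeff_sum]
      simp only [MvPolynomial.coeff_monomial]
      exact Finset.sum_ite_eq' _ _ _
    have key : ∀ γ : Fin n →₀ ℕ,
        c γ * ∏ i, ι (f i) ^ γ i = σ' (P.coeff γ * ∏ i, ι (f i) ^ γ i) := by
      intro γ
      rw [map_mul, map_prod]
      simp_rw [map_pow, hσ'ι, hdiv, hfac]
      rw [Finset.prod_mul_distrib]
      ring
    have hQeval : MvPolynomial.eval (fun i => ι (f i)) Q =
        σ' (MvPolynomial.eval (fun i => ι (f i)) P) := by
      have h1 : MvPolynomial.eval (fun i => ι (f i)) Q =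
          ∑ γ ∈ P.support, c γ * ∏ i, ι (f i) ^ γ i := by
        rw [hQ_def, map_sum]
        refine Finset.sum_congr rfl fun γ hγ => ?_
        rw [MvPolynomial.eval_monomial, Finsupp.prod_fintype _ _ (fun i => pow_zero _)]
      rw [h1, MvPolynomial.eval_eq' (fun i => ι (f i)) P, map_sum]
      exact Finset.sum_congr rfl fun γ _ => key γ
    have hQf : MvPolynomial.eval (fun i => ι (f i)) Q = 0 := by
      rw [hQeval, hPf, map_zero]
    by_cases hcase : ∀ β ∈ P.support, P.coeff β * c α = P.coeff α * c β
    · -- proportionality case : extract the result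
      obtain ⟨β, hβs, hβα⟩ : ∃ β ∈ P.support, β ≠ α := by
        by_contra h
        push_neg at h
        have hsub : P.support = {α} :=
          Finset.eq_singleton_iff_unique_mem.mpr ⟨hα, h⟩
        have heval := MvPolynomial.eval_eq' (fun i => ι (f i)) P
        rw [hsub, Finset.sum_singleton, hPf] at heval
        exact mul_ne_zero (MvPolynomial.mem_support_iff.mp hα)
          (Finset.prod_ne_zero_iff.mpr fun i _ => pow_ne_zero _ (hι_f0 i)) heval.symm
      have hβd : ∑ i, β i ≤ d := by
        have h1 := MvPolynomial.le_totalDegree hβs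
        rw [Finsupp.sum_fintype _ _ (fun i => rfl)] at h1
        exact h1.trans hPdeg
      have hαd : ∑ i, α i ≤ d := by
        have h1 := MvPolynomial.le_totalDegree hα
        rw [Finsupp.sum_fintype _ _ (fun i => rfl)] at h1
        exact h1.trans hPdeg
      refine ⟨fun i => (β i : ℤ) - (α i : ℤ), ?_, ?_, ?_, ?_⟩
      · intro h
        apply hβα
        ext i
        have h2 := congrFun h i
        simp only [Pi.zero_apply, sub_eq_zero] at h2
        exact_mod_cast h2
      · have h3 : ∑ i, ((β i : ℤ) - (α i : ℤ)) =
            ((∑ i, β i : ℕ) : ℤ) - ((∑ i, α i : ℕ) : ℤ) := by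
          push_cast
          rw [Finset.sum_sub_distrib]
        rw [h3]
        omega
      · intro i
        have h4 : β i ≤ ∑ j, β j :=
          Finset.single_le_sum (fun _ _ => Nat.zero_le _) (Finset.mem_univ i)
        have h5 : α i ≤ ∑ j, α j :=
          Finset.single_le_sum (fun _ _ => Nat.zero_le _) (Finset.mem_univ i)
        simp only []
        omega
      · -- extract b₁, b₂ from r = P.coeff β / P.coeff α
        have hPα : P.coeff α ≠ 0 := MvPolynomial.mem_support_iff.mp hα
        have hPβ : P.coeff β ≠ 0 := MvPolynomial.mem_support_iff.mp hβs
        obtain ⟨b₁, b₂, hb₁B, hb₂B, hb₁0, hb₂0, hr⟩ :=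
          hrep (P.coeff β / P.coeff α) (div_mem (hPL β) (hPL α)) (div_ne_zero hPβ hPα)
        refine ⟨b₁, b₂, hb₁B, hb₂B, hb₁0, hb₂0, ?_⟩
        have hιb₁ : ι b₁ ≠ 0 := fun h => hb₁0 (hιinj (by rw [h, map_zero]))
        have hιb₂ : ι b₂ ≠ 0 := fun h => hb₂0 (hιinj (by rw [h, map_zero]))
        have hσb₁ : σ b₁ ≠ 0 := fun h => hb₁0 (hσ (by rw [h, map_zero]))
        have hσb₂ : σ b₂ ≠ 0 := fun h => hb₂0 (hσ (by rw [h, map_zero]))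
        have hισb₁ : ι (σ b₁) ≠ 0 := fun h => hσb₁ (hιinj (by rw [h, map_zero]))
        have hισb₂ : ι (σ b₂) ≠ 0 := fun h => hσb₂ (hιinj (by rw [h, map_zero]))
        have hσ'Pα : σ' (P.coeff α) ≠ 0 := fun h => hPα (hσ'inj (by rw [h, map_zero]))
        have hσ'Pβ : σ' (P.coeff β) ≠ 0 := fun h => hPβ (hσ'inj (by rw [h, map_zero]))
        have e2 : P.coeff β * ι b₂ = P.coeff α * ι b₁ := by
          rw [div_eq_div_iff hPα hιb₂] at hr
          linear_combination hr
        have e3 : σ' (P.coeff β) * ι (σ b₂) = σ' (P.coeff α) * ι (σ b₁) := by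
          have h6 := congrArg σ' e2
          rwa [map_mul, map_mul, hσ'ι, hσ'ι] at h6
        have hprop := hcase β hβs
        set u : F := ∏ i, ι (a i) ^ (-(α i : ℤ)) with hu_def
        set v : F := ∏ i, ι (a i) ^ (-(β i : ℤ)) with hv_def
        have hv0 : v ≠ 0 :=
          Finset.prod_ne_zero_iff.mpr fun i _ => zpow_ne_zero _ (hι_a0 i)
        have e4 : (∏ i, ι (a i) ^ ((β i : ℤ) - (α i : ℤ))) * v = u := by
          rw [hv_def, hu_def, ← Finset.prod_mul_distrib]
          refine Finset.prod_congr rfl fun i _ => ?_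
          rw [← zpow_add₀ (hι_a0 i)]
          congr 1
          ring
        have hw : (∏ i, ι (a i) ^ ((β i : ℤ) - (α i : ℤ))) =
            (P.coeff α * σ' (P.coeff β)) / (P.coeff β * σ' (P.coeff α)) := by
          rw [eq_div_iff (mul_ne_zero hPβ hσ'Pα)]
          apply mul_left_cancel₀ hv0
          linear_combination (P.coeff β * σ' (P.coeff α)) * e4 + hprop
        rw [hw, div_eq_div_iff (mul_ne_zero hPβ hσ'Pα) (mul_ne_zero hισb₂ hιb₁)]
        linear_combination (P.coeff α * ι b₁) * e3 - (σ' (P.coeff α) * ι (σ b₁)) * e2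
    · push_neg at hcase
      obtain ⟨β, hβs, hne⟩ := hcase
      set R := MvPolynomial.C (c α) * P - MvPolynomial.C (P.coeff α) * Q with hR_def
      have hRcoeff : ∀ γ, R.coeff γ = c α * P.coeff γ - P.coeff α * Q.coeff γ := by
        intro γ
        rw [hR_def, MvPolynomial.coeff_sub, MvPolynomial.coeff_C_mul,
          MvPolynomial.coeff_C_mul]
      have hRβ : R.coeff β ≠ 0 := by
        rw [hRcoeff, hQcoeff, if_pos hβs]
        intro h
        exact hne (by linear_combination h)
      have hR0 : R ≠ 0 := fun h => hRβ (by rw [h, MvPolynomial.coeff_zero])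
      have hRsupp : R.support ⊆ P.support.erase α := by
        intro γ hγ
        rw [Finset.mem_erase]
        constructor
        · rintro rfl
          apply MvPolynomial.mem_support_iff.mp hγ
          rw [hRcoeff, hQcoeff, if_pos hα]
          ring
        · by_contra hγP
          apply MvPolynomial.mem_support_iff.mp hγ
          rw [hRcoeff, hQcoeff, if_neg hγP, MvPolynomial.notMem_support_iff.mp hγP]
          ring
      have hRcard : R.support.card ≤ k := by
        have h1 := Finset.card_le_card hRsupp
        have h2 : (P.support.erase α).card < P.support.card :=
          Finset.card_erase_lt_of_mem hα
        omega
      have hRdeg : R.totalDegree ≤ d := by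
        refine le_trans ?_ hPdeg
        exact Finset.sup_mono (hRsupp.trans (Finset.erase_subset _ _))
      have hRL : ∀ γ, MvPolynomial.coeff γ R ∈ L := by
        intro γ
        rw [hRcoeff]
        refine sub_mem (mul_mem (hcL α) (hPL γ)) (mul_mem (hPL α) ?_)
        rw [hQcoeff]
        split
        · exact hcL γ
        · exact zero_mem L
      have hRf : MvPolynomial.eval (fun i => ι (f i)) R = 0 := by
        rw [hR_def, map_sub]
        simp only [map_mul, MvPolynomial.eval_C]
        rw [hPf, hQf]
        ring
      exact ih R hRcard hR0 hRdeg hRL hRf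
end

section
/- Let R be a Dedekind domain with fraction field K, let f_1, …, f_n be formal power series in K[[x_1,…,x_d]], and let S be an infinite set of maximal ideals 𝔭 of R such that all coefficients of every f_i lie in the localization R_𝔭. If for every 𝔭 ∈ S the reductions of f_1, …, f_n modulo 𝔭 (obtained by reducing every coefficient modulo 𝔭R_𝔭) are linearly dependent over the residue field R/𝔭, then f_1, …, f_n are linearly dependent over K. -/
/-- `x ∈ K` lies in the localization `R_𝔭 ⊆ K`. -/
def InLoc (R K : Type*) [CommRing R] [CommRing K] [Algebra R K] (𝔭 : Ideal R) (x : K) : Prop :=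
  ∃ a b : R, b ∉ 𝔭 ∧ algebraMap R K b * x = algebraMap R K a

/-- `x ∈ K` lies in `𝔭 R_𝔭 ⊆ K` (i.e. `x` reduces to `0` modulo `𝔭`). -/
def InMaxLoc (R K : Type*) [CommRing R] [CommRing K] [Algebra R K] (𝔭 : Ideal R) (x : K) :
    Prop :=
  ∃ a b : R, a ∈ 𝔭 ∧ b ∉ 𝔭 ∧ algebraMap R K b * x = algebraMap R K a

/-!
If the `fᵢ` were linearly independent over `K`, some `n × n` minor `M = (coeff mⱼ fᵢ)` of their
coefficient matrix would be nonsingular. Write `det M = a / b` with `a ≠ 0` in `R`; in a Dedekind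
domain only finitely many ideals contain `a`, so some `𝔭 ∈ S` avoids it. After clearing a
denominator prime to `𝔭`, `M` becomes a matrix over `R` whose determinant is a unit modulo `𝔭`,
so the only vector over `R/𝔭` killed by it is zero: the reductions are linearly independent.
-/

open Matrix

theorem span_columns_eq_top_of_linearIndependent {K ι I : Type*} [Field K] [Fintype ι]
    {g : ι → I → K} (hg : LinearIndependent K g) :
    Submodule.span K (Set.range fun m i => g i m) = ⊤ := by
  by_contra hspan
  obtain ⟨φ, hφ, hker⟩ := (Submodule.span K _).exists_le_ker_of_lt_top (lt_top_iff_ne_top.2 hspan)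
  obtain ⟨c, rfl⟩ := (Module.piEquiv ι K K).surjective φ
  have hc : ∑ i, c i • g i = 0 := funext fun m => by
    simpa [Module.piEquiv_apply_apply, mul_comm] using hker (Submodule.subset_span ⟨m, rfl⟩)
  have hc0 : c = 0 := funext (Fintype.linearIndependent_iff.1 hg c hc)
  exact hφ (by rw [hc0, map_zero])

theorem exists_det_ne_zero_of_linearIndependent {K ι I : Type*} [Field K] [Fintype ι]
    [DecidableEq ι] {g : ι → I → K} (hg : LinearIndependent K g) :
    ∃ m : ι → I, (Matrix.of fun i j => g i (m j)).det ≠ 0 := by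
  let b := Module.Basis.ofSpan (span_columns_eq_top_of_linearIndependent hg).ge
  let e := (Pi.basisFun K ι).indexEquiv b
  choose m hm using fun j => Module.Basis.ofSpan_subset _ (Set.mem_range_self (f := b) (e j))
  have hcols : (Matrix.of fun i j => g i (m j)).col = b ∘ e := funext hm
  have hli : LinearIndependent K (Matrix.of fun i j => g i (m j)).col := by
    rw [hcols]; exact b.linearIndependent.comp e e.injective
  exact ⟨m, ((isUnit_iff_isUnit_det _).1 (linearIndependent_cols_iff_isUnit.1 hli)).ne_zero⟩

theorem Ideal.finite_setOf_mem {R : Type*} [CommRing R] [IsDedekindDomain R] {x : R}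
    (hx : x ≠ 0) : {𝔭 : Ideal R | x ∈ 𝔭}.Finite := by
  simp_rw [← Ideal.dvd_span_singleton]
  exact Set.finite_coe_iff.1 <|
    @Finite.of_fintype _ (UniqueFactorizationMonoid.fintypeSubtypeDvd _ (by simpa using hx))

theorem Matrix.mem_of_vecMul_mem {R ι : Type*} [CommRing R] [Fintype ι] [DecidableEq ι]
    {𝔭 : Ideal R} [h𝔭 : 𝔭.IsPrime] {N : Matrix ι ι R} (hN : N.det ∉ 𝔭) {c : ι → R}
    (hc : ∀ j, (c ᵥ* N) j ∈ 𝔭) (i : ι) : c i ∈ 𝔭 := by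
  have hadj : N.det • c = (c ᵥ* N) ᵥ* N.adjugate := by
    rw [vecMul_vecMul, mul_adjugate, vecMul_smul, vecMul_one]
  have hmem : N.det * c i ∈ 𝔭 := by
    rw [← smul_eq_mul, ← Pi.smul_apply, hadj]
    exact Ideal.sum_mem _ fun j _ => 𝔭.mul_mem_right _ (hc j)
  exact (h𝔭.mem_or_mem hmem).resolve_left hN

section Localization

variable {R K : Type*} [CommRing R] [CommRing K] [Algebra R K] {𝔭 : Ideal R}

theorem InMaxLoc.algebraMap_mul {x : K} (hx : InMaxLoc R K 𝔭 x) (s : R) :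
    InMaxLoc R K 𝔭 (algebraMap R K s * x) := by
  obtain ⟨a, b, ha, hb, hab⟩ := hx
  exact ⟨s * a, b, 𝔭.mul_mem_left s ha, hb, by rw [map_mul, ← hab]; ring⟩

theorem mem_of_inMaxLoc_algebraMap [FaithfulSMul R K] [h𝔭 : 𝔭.IsPrime] {r : R}
    (hr : InMaxLoc R K 𝔭 (algebraMap R K r)) : r ∈ 𝔭 := by
  obtain ⟨a, b, ha, hb, hab⟩ := hr
  rw [← map_mul] at hab
  rw [← FaithfulSMul.algebraMap_injective R K hab] at ha
  exact (h𝔭.mem_or_mem ha).resolve_left hb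

theorem exists_algebraMap_mul_eq_of_forall_inLoc [h𝔭 : 𝔭.IsPrime] {ι : Type*} [Fintype ι]
    {x : ι → K} (hx : ∀ i, InLoc R K 𝔭 (x i)) :
    ∃ s ∉ 𝔭, ∃ y : ι → R, ∀ i, algebraMap R K s * x i = algebraMap R K (y i) := by
  classical
  choose a b hb hab using hx
  refine ⟨∏ i, b i, fun h => ?_, fun i => a i * ∏ j ∈ Finset.univ.erase i, b j, fun i => ?_⟩
  · obtain ⟨i, -, hi⟩ := h𝔭.prod_mem_iff.1 h
    exact hb i hi
  · rw [← Finset.mul_prod_erase _ b (Finset.mem_univ i), map_mul, map_mul, mul_right_comm, hab]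

theorem mem_of_inMaxLoc_vecMul [FaithfulSMul R K] [h𝔭 : 𝔭.IsPrime] {ι : Type*} [Fintype ι]
    [DecidableEq ι] {M : Matrix ι ι K} (hM : ∀ i j, InLoc R K 𝔭 (M i j)) {a b : R}
    (ha : a ∉ 𝔭) (hdet : M.det * algebraMap R K b = algebraMap R K a)
    {c : ι → R} (hc : ∀ j, InMaxLoc R K 𝔭 (((algebraMap R K ∘ c) ᵥ* M) j)) (i : ι) :
    c i ∈ 𝔭 := by
  obtain ⟨s, hs, y, hy⟩ :=
    exists_algebraMap_mul_eq_of_forall_inLoc (x := fun p : ι × ι => M p.1 p.2) fun p => hM _ _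
  set N : Matrix ι ι R := Matrix.of fun i j => y (i, j)
  have hNM : N.map (algebraMap R K) = algebraMap R K s • M := by
    ext i j; exact (hy (i, j)).symm
  have hNdet : N.det ∉ 𝔭 := by
    have h : N.det * b = s ^ Fintype.card ι * a := FaithfulSMul.algebraMap_injective R K <| by
      rw [map_mul, RingHom.map_det, RingHom.mapMatrix_apply, hNM, det_smul, mul_assoc, hdet,
        map_mul, map_pow]
    intro hN
    rcases h𝔭.mem_or_mem (h ▸ 𝔭.mul_mem_right b hN) with h | h
    · exact hs (h𝔭.mem_of_pow_mem _ h)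
    · exact ha h
  have hcN (j : ι) : algebraMap R K ((c ᵥ* N) j) =
      algebraMap R K s * ((algebraMap R K ∘ c) ᵥ* M) j := by
    rw [RingHom.map_vecMul, hNM, vecMul_smul, Pi.smul_apply, smul_eq_mul]
  refine mem_of_vecMul_mem hNdet (fun j => mem_of_inMaxLoc_algebraMap (K := K) ?_) i
  rw [hcN]
  exact (hc j).algebraMap_mul s

end Localization

/-- Let `R` be a Dedekind domain with fraction field `K`, `f₁, …, fₙ`
multivariate power series over `K`, and `S` an infinite set of maximal ideals `𝔭` of `R` such
that all coefficients of every `fᵢ` lie in `R_𝔭`. If for every `𝔭 ∈ S` the reductions of the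
`fᵢ` modulo `𝔭` are linearly dependent over `R/𝔭` (equivalently: there are `c₁, …, cₙ ∈ R`,
not all in `𝔭`, with every coefficient of `∑ cᵢ fᵢ` lying in `𝔭R_𝔭`), then `f₁, …, fₙ` are
linearly dependent over `K`. -/
theorem linear_dependence_of_reductions
    {R K : Type} [CommRing R] [IsDedekindDomain R] [Field K] [Algebra R K] [IsFractionRing R K]
    {d n : ℕ} (S : Set (Ideal R)) (hSinf : S.Infinite) (hSmax : ∀ 𝔭 ∈ S, Ideal.IsMaximal 𝔭)
    (f : Fin n → MvPowerSeries (Fin d) K)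
    (hcoeff : ∀ 𝔭 ∈ S, ∀ i, ∀ m, InLoc R K 𝔭 (MvPowerSeries.coeff m (f i)))
    (hdep : ∀ 𝔭 ∈ S, ∃ c : Fin n → R, (∃ i, c i ∉ 𝔭) ∧
      ∀ m, InMaxLoc R K 𝔭 (∑ i, algebraMap R K (c i) * MvPowerSeries.coeff m (f i))) :
    ∃ b : Fin n → K, b ≠ 0 ∧ ∑ i, b i • f i = 0 := by
  suffices ¬LinearIndependent K f by
    obtain ⟨b, hb, i, hi⟩ := Fintype.not_linearIndependent_iff.1 this
    exact ⟨b, fun h => hi (congrFun h i), hb⟩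
  intro hf
  -- `MvPowerSeries (Fin d) K` is by definition the function space `(Fin d →₀ ℕ) → K`.
  obtain ⟨m, hdet⟩ :=
    exists_det_ne_zero_of_linearIndependent (g := fun i m => MvPowerSeries.coeff m (f i)) hf
  set M := Matrix.of fun i j => MvPowerSeries.coeff (m j) (f i)
  obtain ⟨⟨a, b⟩, hab⟩ := IsLocalization.surj (nonZeroDivisors R) M.det
  have ha : a ≠ 0 := by
    rintro rfl
    rw [map_zero, mul_eq_zero] at hab
    exact hab.elim hdet (IsFractionRing.to_map_ne_zero_of_mem_nonZeroDivisors b.2)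
  obtain ⟨𝔭, h𝔭S, ha𝔭⟩ := (hSinf.sdiff (Ideal.finite_setOf_mem ha)).nonempty
  have := (hSmax 𝔭 h𝔭S).isPrime
  obtain ⟨c, ⟨i, hi⟩, hc⟩ := hdep 𝔭 h𝔭S
  exact hi (mem_of_inMaxLoc_vecMul (fun i j => hcoeff 𝔭 h𝔭S i (m j)) ha𝔭 hab
    (fun j => hc (m j)) i)
end

section
/- Let R be a Dedekind domain with fraction field K and S a set of maximal ideals of R with finite residue fields. A power series f(x) = Σ_{n∈ℕ^d} a(n) x^n ∈ K[[x_1,…,x_d]] belongs to 𝔏_d(R,S) if and only if a(0) = 1 and there exists a positive integer k such that the family (a(n))_{n∈ℕ^d} has the p^k-Lucas property with respect to S. -/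
/-- The power series `f(x₁^q, …, x_d^q)`. -/
noncomputable def substPow {d : ℕ} {K : Type*} [CommRing K] (q : ℕ)
    (f : MvPowerSeries (Fin d) K) : MvPowerSeries (Fin d) K :=
  fun m => if ∀ i, q ∣ m i then f (Finsupp.mapRange (· / q) (Nat.zero_div _) m) else 0

/-- Membership in `𝔏_d(R,S)`: `f` has constant term `1` and there is a `k ≥ 1`, independent
of `𝔭`, such that for every `𝔭 ∈ S` (with finite residue field of characteristic `p`) all
coefficients of `f` lie in `R_𝔭` and `f(x) ≡ A(x)·f(x^{p^k}) mod 𝔭R_𝔭[[x]]` for a polynomial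
`A` with coefficients in `R_𝔭` and `deg_{xᵢ} A ≤ p^k − 1` in each variable. -/
def MemLfrak (R K : Type*) [CommRing R] [Field K] [Algebra R K] (d : ℕ) (S : Set (Ideal R))
    (f : MvPowerSeries (Fin d) K) : Prop :=
  MvPowerSeries.constantCoeff f = 1 ∧
  ∃ k : ℕ, 0 < k ∧ ∀ 𝔭 ∈ S, ∃ p : ℕ, p.Prime ∧ Finite (R ⧸ 𝔭) ∧ CharP (R ⧸ 𝔭) p ∧
    (∀ m, InLoc R K 𝔭 (MvPowerSeries.coeff m f)) ∧
    ∃ A : MvPolynomial (Fin d) K,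
      (∀ m, InLoc R K 𝔭 (MvPolynomial.coeff m A)) ∧
      (∀ i : Fin d, A.degreeOf i ≤ p ^ k - 1) ∧
      ∀ m, InMaxLoc R K 𝔭
        (MvPowerSeries.coeff m (f - (A : MvPowerSeries (Fin d) K) * substPow (p ^ k) f))

/-- The family `a : ℕ^d → K` has the `p^k`-Lucas property with respect to `S`: for every
`𝔭 ∈ S` (with finite residue field of characteristic `p`), all values lie in `R_𝔭` and
`a(v + p^k·m) ≡ a(v)·a(m) mod 𝔭R_𝔭` for all `v ∈ {0,…,p^k−1}^d` and `m ∈ ℕ^d`. -/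
def PkLucas (R K : Type*) [CommRing R] [Field K] [Algebra R K] {d : ℕ} (S : Set (Ideal R))
    (k : ℕ) (a : (Fin d →₀ ℕ) → K) : Prop :=
  ∀ 𝔭 ∈ S, ∃ p : ℕ, p.Prime ∧ Finite (R ⧸ 𝔭) ∧ CharP (R ⧸ 𝔭) p ∧
    (∀ n, InLoc R K 𝔭 (a n)) ∧
    ∀ v m : Fin d →₀ ℕ, (∀ i, v i ≤ p ^ k - 1) →
      InMaxLoc R K 𝔭 (a (v + p ^ k • m) - a v * a m)

/-!
Coefficientwise, `f ≡ A · f(x^q)` says `a(v + q m) ≡ A_v · a(m)` for every box index `v`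
(`0 ≤ vᵢ < q`), because the degree bound on `A` leaves exactly one way of writing an exponent
as (exponent of `A`) + `q` · (exponent of `f`). Taking `m = 0` and `a(0) = 1` forces
`A_v ≡ a(v)`, so the congruence is the `q`-Lucas property; conversely the Lucas property makes
the truncation of `f` to the box a valid `A`.
-/

section Localization

variable {R K : Type} [CommRing R] [CommRing K] [Algebra R K] {𝔭 : Ideal R} {x y : K}

theorem InLoc.zero (h𝔭 : 𝔭 ≠ ⊤) : InLoc R K 𝔭 0 :=
  ⟨0, 1, (Ideal.ne_top_iff_one 𝔭).mp h𝔭, by simp⟩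

theorem InMaxLoc.sub [𝔭.IsPrime] (hx : InMaxLoc R K 𝔭 x) (hy : InMaxLoc R K 𝔭 y) :
    InMaxLoc R K 𝔭 (x - y) := by
  obtain ⟨a, b, ha, hb, hab⟩ := hx
  obtain ⟨c, e, hc, he, hce⟩ := hy
  refine ⟨e * a - b * c, b * e, 𝔭.sub_mem (𝔭.mul_mem_left _ ha) (𝔭.mul_mem_left _ hc),
    Ideal.IsPrime.mul_notMem ‹_› hb he, ?_⟩
  rw [map_mul, map_sub, map_mul, map_mul, ← hab, ← hce]
  ring

theorem InMaxLoc.mul_inLoc [𝔭.IsPrime] (hx : InMaxLoc R K 𝔭 x) (hy : InLoc R K 𝔭 y) :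
    InMaxLoc R K 𝔭 (x * y) := by
  obtain ⟨a, b, ha, hb, hab⟩ := hx
  obtain ⟨c, e, he, hce⟩ := hy
  refine ⟨a * c, b * e, 𝔭.mul_mem_right _ ha, Ideal.IsPrime.mul_notMem ‹_› hb he, ?_⟩
  rw [map_mul, map_mul, ← hab, ← hce]
  ring

end Localization

section Digits

variable {σ : Type*} {q : ℕ}

noncomputable def componentMod (q : ℕ) (n : σ →₀ ℕ) : σ →₀ ℕ :=
  n.mapRange (· % q) (Nat.zero_mod q)

noncomputable def componentDiv (q : ℕ) (n : σ →₀ ℕ) : σ →₀ ℕ :=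
  n.mapRange (· / q) (Nat.zero_div q)

@[simp] theorem componentMod_apply (n : σ →₀ ℕ) (i : σ) : componentMod q n i = n i % q := rfl

@[simp] theorem componentDiv_apply (n : σ →₀ ℕ) (i : σ) : componentDiv q n i = n i / q := rfl

theorem componentMod_add_smul_componentDiv (q : ℕ) (n : σ →₀ ℕ) :
    componentMod q n + q • componentDiv q n = n := by
  ext i
  simp [Nat.mod_add_div]

theorem componentMod_add_smul {v : σ →₀ ℕ} (hv : ∀ i, v i < q) (m : σ →₀ ℕ) :
    componentMod q (v + q • m) = v := by
  ext i
  simp [Nat.add_mul_mod_self_left, Nat.mod_eq_of_lt (hv i)]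

theorem componentDiv_add_smul {v : σ →₀ ℕ} (hv : ∀ i, v i < q) (m : σ →₀ ℕ) :
    componentDiv q (v + q • m) = m := by
  ext i
  simp [Nat.add_mul_div_left _ _ ((Nat.zero_le _).trans_lt (hv i)), Nat.div_eq_of_lt (hv i)]

theorem componentMod_of_lt {v : σ →₀ ℕ} (hv : ∀ i, v i < q) : componentMod q v = v := by
  simpa using componentMod_add_smul hv 0

theorem componentDiv_of_lt {v : σ →₀ ℕ} (hv : ∀ i, v i < q) : componentDiv q v = 0 := by
  simpa using componentDiv_add_smul hv 0

end Digits

section SubstPow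

variable {d : ℕ} {K : Type} [CommRing K]

theorem coeff_substPow (q : ℕ) (f : MvPowerSeries (Fin d) K) (n : Fin d →₀ ℕ) :
    MvPowerSeries.coeff n (substPow q f) =
      if ∀ i, q ∣ n i then MvPowerSeries.coeff (componentDiv q n) f else 0 :=
  rfl

theorem coeff_substPow_smul {q : ℕ} (hq : 0 < q) (f : MvPowerSeries (Fin d) K)
    (m : Fin d →₀ ℕ) : MvPowerSeries.coeff (q • m) (substPow q f) = MvPowerSeries.coeff m f := by
  have hdiv : componentDiv q (q • m) = m := by
    simpa using componentDiv_add_smul (v := 0) (fun _ => hq) m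
  rw [coeff_substPow, if_pos fun i => by simp, hdiv]

/-- The degree bound on `A` makes the digit decomposition the only way to write
`n = u + q • w` with `u` in the support of `A`. -/
theorem coeff_mul_substPow {q : ℕ} (hq : 0 < q) {A : MvPolynomial (Fin d) K}
    (hA : ∀ i, A.degreeOf i ≤ q - 1) (f : MvPowerSeries (Fin d) K) (n : Fin d →₀ ℕ) :
    MvPowerSeries.coeff n ((A : MvPowerSeries (Fin d) K) * substPow q f) =
      A.coeff (componentMod q n) * MvPowerSeries.coeff (componentDiv q n) f := by
  rw [MvPowerSeries.coeff_mul,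
    Finset.sum_eq_single_of_mem (componentMod q n, q • componentDiv q n)
      (by simp [componentMod_add_smul_componentDiv]),
    MvPolynomial.coeff_coe, coeff_substPow_smul hq]
  rintro ⟨u, w⟩ huw hne
  rw [Finset.HasAntidiagonal.mem_antidiagonal] at huw
  by_contra hterm
  have hu : ∀ i, u i < q := fun i => Nat.lt_of_le_pred hq <|
    MvPolynomial.degreeOf_le_iff.mp (hA i) u
      (MvPolynomial.mem_support_iff.mpr (left_ne_zero_of_mul hterm))
  have hw : ∀ i, q ∣ w i := by
    by_contra h
    exact hterm (by rw [coeff_substPow, if_neg h, mul_zero])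
  have hw' : w = q • componentDiv q w := by
    ext i
    simp [Nat.mul_div_cancel' (hw i)]
  apply hne
  rw [← huw, hw', componentMod_add_smul hu, componentDiv_add_smul hu]

end SubstPow

theorem degreeOf_trunc'_le {σ R : Type*} [DecidableEq σ] [CommSemiring R] (n : σ →₀ ℕ)
    (φ : MvPowerSeries σ R) (i : σ) : (MvPowerSeries.trunc' R n φ).degreeOf i ≤ n i := by
  refine MvPolynomial.degreeOf_le_iff.mpr fun m hm => ?_
  rw [MvPolynomial.mem_support_iff, MvPowerSeries.coeff_trunc'] at hm
  exact (of_not_not fun h => hm (if_neg h)) i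

section LucasCongruence

variable {R K : Type} [CommRing R] [CommRing K] [Algebra R K] {𝔭 : Ideal R}
  {d q : ℕ} {f : MvPowerSeries (Fin d) K}

theorem lucas_of_congr_mul_substPow [𝔭.IsPrime] (hq : 0 < q)
    (hf₀ : MvPowerSeries.constantCoeff f = 1)
    (hf : ∀ m, InLoc R K 𝔭 (MvPowerSeries.coeff m f)) {A : MvPolynomial (Fin d) K}
    (hA : ∀ i, A.degreeOf i ≤ q - 1)
    (hcongr : ∀ n, InMaxLoc R K 𝔭
      (MvPowerSeries.coeff n (f - (A : MvPowerSeries (Fin d) K) * substPow q f)))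
    (v m : Fin d →₀ ℕ) (hv : ∀ i, v i ≤ q - 1) :
    InMaxLoc R K 𝔭 (MvPowerSeries.coeff (v + q • m) f -
      MvPowerSeries.coeff v f * MvPowerSeries.coeff m f) := by
  have hv' : ∀ i, v i < q := fun i => Nat.lt_of_le_pred hq (hv i)
  have hcongr_at : ∀ n, InMaxLoc R K 𝔭 (MvPowerSeries.coeff n f -
      A.coeff (componentMod q n) * MvPowerSeries.coeff (componentDiv q n) f) := fun n => by
    simpa only [map_sub, coeff_mul_substPow hq hA] using hcongr n
  have hshift := hcongr_at (v + q • m)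
  rw [componentMod_add_smul hv', componentDiv_add_smul hv'] at hshift
  have hbox := hcongr_at v
  rw [componentMod_of_lt hv', componentDiv_of_lt hv',
    MvPowerSeries.coeff_zero_eq_constantCoeff_apply, hf₀, mul_one] at hbox
  convert hshift.sub (hbox.mul_inLoc (hf m)) using 1
  ring

theorem congr_trunc'_mul_substPow_of_lucas (hq : 0 < q)
    (hlucas : ∀ v m : Fin d →₀ ℕ, (∀ i, v i ≤ q - 1) →
      InMaxLoc R K 𝔭 (MvPowerSeries.coeff (v + q • m) f -
        MvPowerSeries.coeff v f * MvPowerSeries.coeff m f))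
    (n : Fin d →₀ ℕ) :
    InMaxLoc R K 𝔭 (MvPowerSeries.coeff n (f -
      (MvPowerSeries.trunc' K (Finsupp.equivFunOnFinite.symm fun _ => q - 1) f :
        MvPowerSeries (Fin d) K) * substPow q f)) := by
  have hmod : ∀ i, componentMod q n i ≤ q - 1 := fun i => Nat.le_sub_one_of_lt (Nat.mod_lt _ hq)
  rw [map_sub, coeff_mul_substPow hq (degreeOf_trunc'_le _ f), MvPowerSeries.coeff_trunc',
    if_pos (Finsupp.le_def.mpr hmod)]
  simpa only [componentMod_add_smul_componentDiv] using
    hlucas (componentMod q n) (componentDiv q n) hmod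

theorem exists_congr_mul_substPow_iff_lucas [𝔭.IsPrime] (hq : 0 < q)
    (hf₀ : MvPowerSeries.constantCoeff f = 1) (hf : ∀ m, InLoc R K 𝔭 (MvPowerSeries.coeff m f)) :
    (∃ A : MvPolynomial (Fin d) K, (∀ m, InLoc R K 𝔭 (A.coeff m)) ∧
      (∀ i, A.degreeOf i ≤ q - 1) ∧
      ∀ n, InMaxLoc R K 𝔭
        (MvPowerSeries.coeff n (f - (A : MvPowerSeries (Fin d) K) * substPow q f))) ↔
    ∀ v m : Fin d →₀ ℕ, (∀ i, v i ≤ q - 1) →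
      InMaxLoc R K 𝔭 (MvPowerSeries.coeff (v + q • m) f -
        MvPowerSeries.coeff v f * MvPowerSeries.coeff m f) := by
  refine ⟨fun ⟨A, _, hA, hcongr⟩ => lucas_of_congr_mul_substPow hq hf₀ hf hA hcongr,
    fun hlucas => ⟨_, fun m => ?_, degreeOf_trunc'_le _ f,
      congr_trunc'_mul_substPow_of_lucas hq hlucas⟩⟩
  rw [MvPowerSeries.coeff_trunc']
  split_ifs
  exacts [hf m, InLoc.zero Ideal.IsPrime.ne_top']

end LucasCongruence

theorem memLfrak_iff_pkLucas_general
    {R K : Type} [CommRing R] [Field K] [Algebra R K]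
    {d : ℕ} (S : Set (Ideal R)) (hSmax : ∀ 𝔭 ∈ S, Ideal.IsMaximal 𝔭)
    (f : MvPowerSeries (Fin d) K) :
    MemLfrak R K d S f ↔
      (MvPowerSeries.constantCoeff f = 1 ∧
        ∃ k : ℕ, 0 < k ∧ PkLucas R K S k (fun m => MvPowerSeries.coeff m f)) := by
  refine and_congr_right fun hf₀ => exists_congr fun k => and_congr_right fun _ =>
    forall₂_congr fun 𝔭 h𝔭 => exists_congr fun p => and_congr_right fun hp => ?_
  have := (hSmax 𝔭 h𝔭).isPrime
  refine and_congr_right fun _ => and_congr_right fun _ => and_congr_right fun hf => ?_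
  exact exists_congr_mul_substPow_iff_lucas (pow_pos hp.pos k) hf₀ hf

/-- A power series `f = ∑ a(n) xⁿ ∈ K[[x₁,…,x_d]]` belongs to `𝔏_d(R,S)` if
and only if `a(0) = 1` and there is a positive integer `k` such that the coefficient family
`(a(n))` has the `p^k`-Lucas property with respect to `S`. -/
theorem memLfrak_iff_pkLucas
    {R K : Type} [CommRing R] [IsDedekindDomain R] [Field K] [Algebra R K] [IsFractionRing R K]
    {d : ℕ} (S : Set (Ideal R)) (hSmax : ∀ 𝔭 ∈ S, Ideal.IsMaximal 𝔭)
    (hSfin : ∀ 𝔭 ∈ S, Finite (R ⧸ 𝔭)) (f : MvPowerSeries (Fin d) K) :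
    MemLfrak R K d S f ↔
      (MvPowerSeries.constantCoeff f = 1 ∧
        ∃ k : ℕ, 0 < k ∧ PkLucas R K S k (fun m => MvPowerSeries.coeff m f)) :=
  memLfrak_iff_pkLucas_general S hSmax f
end

section
/- Let α = (α_1,…,α_r) be a tuple of rational numbers in (0,1) and let d be the least common multiple of their denominators. Consider the generalized hypergeometric coefficients Q(n) := (α_1)_n ⋯ (α_r)_n / (n!)^r. Then for every prime p > d there exists a positive integer k (one may take k to be the multiplicative order of p modulo d) such that Q has the p^k-Lucas property: Q(n) ∈ ℤ_(p) for all n, and Q(a + p^k·m) ≡ Q(a)·Q(m) mod p·ℤ_(p) for all a ∈ {0,…,p^k−1} and m ∈ ℕ. Equivalently, the hypergeometric series F(x) = Σ_{n≥0} Q(n) x^n belongs to 𝔏_1(ℤ,S) for S the set of primes larger than d. -/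
/-!
Write `M(x, n) = (x)ₙ / n!` for `x ∈ ℤ_[p]`; this is `Ring.multichoose x n ∈ ℤ_[p]`.
If `x + a = p y` with `0 ≤ a < p`, then `M(x, v + p m) ≡ M(x, v) M(y, m) mod p` for `v < p`
(Dwork). Splitting off the last `v` factors reduces this to `v = 0`, shifting by `a` reduces it
to `x = p y`, and then each block of `p` consecutive factors of `(p y)_{p m}` and of `(p m)!`
contains exactly one multiple of `p`, namely `p (y + l)` resp. `p (l + 1)`, while the other
factors of the two blocks agree mod `p`. Iterating, `M(x, v + p^k m) ≡ M(x, v) M(x⁽ᵏ⁾, m)` for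
`v < p^k`, where `x⁽ᵏ⁾` is the `k`-th iterate of `x ↦ y`. For `x = s / d` with `0 ≤ s < d` this
map acts on numerators by `s ↦ s p⁻¹ mod d`, so `x⁽ᵏ⁾ = x` once `p^k ≡ 1 mod d`; and `Q` is the
product of the `M(αᵢ, ·)`.
-/

open Polynomial Nat

section BinomialRing

theorem ascPochhammer_eval_add {S : Type*} [CommSemiring S] (x : S) (n k : ℕ) :
    (ascPochhammer S (n + k)).eval x =
      (ascPochhammer S n).eval x * (ascPochhammer S k).eval (x + n) := by
  rw [← ascPochhammer_mul, eval_mul, eval_comp, eval_add, eval_X, eval_natCast]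

theorem ascPochhammer_eval_succ_left {S : Type*} [CommSemiring S] (x : S) (n : ℕ) :
    (ascPochhammer S (n + 1)).eval x = x * (ascPochhammer S n).eval (x + 1) := by
  rw [ascPochhammer_succ_left, eval_mul, eval_X, eval_comp, eval_add, eval_X, eval_one]

theorem RingHom.map_ascPochhammer_eval {S T : Type*} [Semiring S] [Semiring T] (f : S →+* T)
    (n : ℕ) (x : S) : f ((ascPochhammer S n).eval x) = (ascPochhammer T n).eval (f x) := by
  rw [ascPochhammer_eval₂ f, eval₂_hom]

variable {R : Type*} [CommRing R] [BinomialRing R]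

theorem Ring.factorial_mul_multichoose (x : R) (n : ℕ) :
    (n ! : R) * Ring.multichoose x n = (ascPochhammer R n).eval x := by
  rw [← nsmul_eq_mul, Ring.factorial_nsmul_multichoose_eq_ascPochhammer,
    ascPochhammer_smeval_eq_eval]

theorem Ring.eq_of_factorial_mul_eq {a b : R} {n : ℕ} (h : (n ! : R) * a = n ! * b) : a = b := by
  have := BinomialRing.toIsAddTorsionFree (R := R)
  simp only [← nsmul_eq_mul] at h
  exact IsAddTorsionFree.nsmul_right_injective (factorial_ne_zero n) h

theorem Ring.multichoose_add_mul_eval (x : R) (n k : ℕ) :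
    Ring.multichoose x (n + k) * (ascPochhammer R k).eval ((n : R) + 1) =
      Ring.multichoose x n * (ascPochhammer R k).eval (x + n) := by
  refine Ring.eq_of_factorial_mul_eq (n := n) ?_
  have hfac : (n ! : R) * (ascPochhammer R k).eval ((n : R) + 1) = ((n + k) ! : R) := by
    rw [← ascPochhammer_eval_one, ← ascPochhammer_eval_one, ascPochhammer_eval_add,
      add_comm (1 : R)]
  rw [← mul_assoc, mul_comm _ (Ring.multichoose x (n + k)), mul_assoc, hfac, mul_comm,
    Ring.factorial_mul_multichoose, ← mul_assoc, Ring.factorial_mul_multichoose,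
    ascPochhammer_eval_add]

theorem Ring.multichoose_mul_eval_add (x : R) (n k : ℕ) :
    Ring.multichoose x n * (ascPochhammer R k).eval (x + n) =
      (ascPochhammer R k).eval x * Ring.multichoose (x + k) n := by
  refine Ring.eq_of_factorial_mul_eq (n := n) ?_
  rw [← mul_assoc, Ring.factorial_mul_multichoose, ← ascPochhammer_eval_add, mul_left_comm,
    Ring.factorial_mul_multichoose, ← ascPochhammer_eval_add, add_comm]

end BinomialRing

theorem ZMod.natCast_factorial_ne_zero {p n : ℕ} [hp : Fact p.Prime] (hn : n < p) :
    (n ! : ZMod p) ≠ 0 := by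
  rw [Ne, ZMod.natCast_eq_zero_iff, hp.out.dvd_factorial]
  omega

theorem Nat.exists_lt_add_mul_eq_of_modEq {p D s t : ℕ} (hp : 0 < p) (h : p * t ≡ s [MOD D])
    (hs : s < D) (ht : t < D) : ∃ a < p, s + a * D = p * t := by
  refine ⟨p * t / D, ?_, ?_⟩
  · rw [Nat.div_lt_iff_lt_mul (by omega)]
    exact Nat.mul_lt_mul_of_pos_left ht hp
  · rw [← Nat.mod_eq_of_lt hs, ← h, Nat.mod_add_div']

theorem Rat.exists_natCast_eq_mul_of_den_dvd {α : ℚ} {d : ℕ} (h0 : 0 ≤ α) (h1 : α < 1)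
    (hd : α.den ∣ d) (hd0 : d ≠ 0) : ∃ s < d, α * d = s := by
  obtain ⟨e, rfl⟩ := hd
  have hs : α * ((α.den * e : ℕ) : ℚ) = ((α.num.toNat * e : ℕ) : ℚ) := by
    rw [Nat.cast_mul, Nat.cast_mul, ← mul_assoc, Rat.mul_den_eq_num]
    norm_cast
    rw [Nat.cast_mul, Int.toNat_of_nonneg (Rat.num_nonneg.mpr h0)]
  refine ⟨α.num.toNat * e, ?_, hs⟩
  have hpos : (0 : ℚ) < (α.den * e : ℕ) := by exact_mod_cast Nat.pos_of_ne_zero hd0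
  exact_mod_cast hs ▸ mul_lt_of_lt_one_left hpos h1

namespace PadicInt

variable {p : ℕ} [hp : Fact p.Prime]

theorem toZMod_p_mul (z : ℤ_[p]) : toZMod ((p : ℤ_[p]) * z) = 0 := by
  rw [map_mul, map_natCast, ZMod.natCast_self, zero_mul]

theorem toZMod_ascPochhammer_eval_p_mul_add_one (z : ℤ_[p]) (n : ℕ) :
    toZMod ((ascPochhammer ℤ_[p] n).eval ((p : ℤ_[p]) * z + 1)) = n ! := by
  rw [RingHom.map_ascPochhammer_eval, map_add, toZMod_p_mul, map_one, zero_add,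
    ascPochhammer_eval_one]

/-- Each block `[p l, p l + p)` of `(p y)_{p m}` and of `(p m)!` contributes the multiple
`p (y + l)` resp. `p (l + 1)` of `p`; the products record the other factors. -/
theorem prod_mul_multichoose_p_mul_p_mul (y : ℤ_[p]) (m : ℕ) :
    (∏ l ∈ Finset.range m, (ascPochhammer ℤ_[p] (p - 1)).eval ((p : ℤ_[p]) * l + 1)) *
        Ring.multichoose ((p : ℤ_[p]) * y) (p * m) =
      Ring.multichoose y m *
        ∏ l ∈ Finset.range m, (ascPochhammer ℤ_[p] (p - 1)).eval ((p : ℤ_[p]) * (y + l) + 1) := by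
  induction m with
  | zero => simp
  | succ m ih =>
    set E := ∏ l ∈ Finset.range m, (ascPochhammer ℤ_[p] (p - 1)).eval ((p : ℤ_[p]) * l + 1)
    set C := ∏ l ∈ Finset.range m,
      (ascPochhammer ℤ_[p] (p - 1)).eval ((p : ℤ_[p]) * (y + l) + 1)
    set c := (ascPochhammer ℤ_[p] (p - 1)).eval ((p : ℤ_[p]) * (y + m) + 1)
    have hp1 : p - 1 + 1 = p := Nat.sub_add_cancel hp.out.one_le
    have hblock := Ring.multichoose_add_mul_eval ((p : ℤ_[p]) * y) (p * m) p
    rw [congrArg (ascPochhammer ℤ_[p]) hp1.symm, ascPochhammer_succ_eval,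
      ascPochhammer_eval_succ_left,
      show (p : ℤ_[p]) * y + (p * m : ℕ) + 1 = p * (y + m) + 1 by push_cast; ring] at hblock
    have hstep := Ring.multichoose_add_mul_eval y m 1
    rw [ascPochhammer_one, eval_X, eval_X] at hstep
    have hne : ((p : ℤ_[p]) * (m + 1)) ≠ 0 := by
      exact_mod_cast Nat.mul_ne_zero hp.out.ne_zero m.succ_ne_zero
    refine mul_right_cancel₀ hne ?_
    rw [Finset.prod_range_succ, Finset.prod_range_succ, Nat.mul_succ]
    push_cast [Nat.cast_sub hp.out.one_le] at hblock ⊢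
    linear_combination E * hblock + ((p : ℤ_[p]) * y + p * m) * c * ih - (p : ℤ_[p]) * C * c * hstep

theorem toZMod_multichoose_p_mul_p_mul (y : ℤ_[p]) (m : ℕ) :
    toZMod (Ring.multichoose ((p : ℤ_[p]) * y) (p * m)) = toZMod (Ring.multichoose y m) := by
  have h := congrArg toZMod (prod_mul_multichoose_p_mul_p_mul y m)
  simp only [map_mul, map_prod, toZMod_ascPochhammer_eval_p_mul_add_one] at h
  have hne : ∏ _l ∈ Finset.range m, ((p - 1) ! : ZMod p) ≠ 0 :=
    Finset.prod_ne_zero_iff.mpr fun _ _ =>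
      ZMod.natCast_factorial_ne_zero (Nat.sub_lt hp.out.pos one_pos)
  exact mul_left_cancel₀ hne (h.trans (mul_comm _ _))

theorem toZMod_multichoose_p_mul {x y : ℤ_[p]} {a : ℕ} (ha : a < p) (hxy : x + a = p * y)
    (m : ℕ) : toZMod (Ring.multichoose x (p * m)) = toZMod (Ring.multichoose y m) := by
  have hx : toZMod x = -a := by
    rw [eq_neg_iff_add_eq_zero, ← map_natCast toZMod, ← map_add, hxy, toZMod_p_mul]
  have h := congrArg toZMod (Ring.multichoose_mul_eval_add x (p * m) a)
  rw [hxy, map_mul, map_mul, toZMod_multichoose_p_mul_p_mul y m] at h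
  simp only [RingHom.map_ascPochhammer_eval, map_add, Nat.cast_mul, toZMod_p_mul,
    add_zero] at h
  refine mul_right_cancel₀ ?_ (h.trans (mul_comm _ _))
  rw [Ne, ascPochhammer_eval_eq_zero_iff, hx, neg_neg]
  rintro ⟨k, hk, hka⟩
  rw [ZMod.natCast_eq_natCast_iff', Nat.mod_eq_of_lt (hk.trans ha), Nat.mod_eq_of_lt ha] at hka
  omega

theorem toZMod_multichoose_add_p_mul {x y : ℤ_[p]} {a : ℕ} (ha : a < p) (hxy : x + a = p * y)
    {v : ℕ} (hv : v < p) (m : ℕ) :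
    toZMod (Ring.multichoose x (v + p * m)) =
      toZMod (Ring.multichoose x v) * toZMod (Ring.multichoose y m) := by
  have h := congrArg toZMod (Ring.multichoose_add_mul_eval x (p * m) v)
  have hv' := congrArg toZMod (Ring.factorial_mul_multichoose x v)
  simp only [map_mul, RingHom.map_ascPochhammer_eval, map_add, map_one, map_natCast, Nat.cast_mul,
    ZMod.natCast_self, zero_mul, zero_add, add_zero, ascPochhammer_eval_one] at h hv'
  rw [← hv', toZMod_multichoose_p_mul ha hxy, add_comm] at h
  refine mul_right_cancel₀ (ZMod.natCast_factorial_ne_zero hv) ?_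
  rw [h]
  ring

theorem toZMod_multichoose_add_pow_mul {x : ℕ → ℤ_[p]}
    (hx : ∀ j, ∃ a < p, x j + a = p * x (j + 1)) (k : ℕ) {v : ℕ} (hv : v < p ^ k) (m : ℕ) :
    toZMod (Ring.multichoose (x 0) (v + p ^ k * m)) =
      toZMod (Ring.multichoose (x 0) v) * toZMod (Ring.multichoose (x k) m) := by
  induction k generalizing x v with
  | zero =>
    obtain rfl : v = 0 := by simpa using hv
    simp
  | succ k ih =>
    obtain ⟨a, ha, hxa⟩ := hx 0
    have hvw : v % p + p * (v / p) = v := Nat.mod_add_div v p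
    have hw : v / p < p ^ k := by
      rw [Nat.div_lt_iff_lt_mul hp.out.pos, ← pow_succ]
      exact hv
    have ih' := ih (x := fun j => x (j + 1)) (fun j => hx (j + 1)) hw
    rw [zero_add] at ih'
    have hsplit : v + p ^ (k + 1) * m = v % p + p * (v / p + p ^ k * m) := by
      rw [mul_add, ← add_assoc, hvw, pow_succ', mul_assoc]
    rw [hsplit, toZMod_multichoose_add_p_mul ha hxa (Nat.mod_lt v hp.out.pos), ih', ← mul_assoc,
      ← toZMod_multichoose_add_p_mul ha hxa (Nat.mod_lt v hp.out.pos), hvw]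

theorem exists_dwork_orbit {D s k : ℕ} [NeZero D] (hpD : p.Coprime D)
    (hk : (p : ZMod D) ^ k = 1) (hs : s < D) {x : ℤ_[p]} (hx : (D : ℤ_[p]) * x = s) :
    ∃ y : ℕ → ℤ_[p], y 0 = x ∧ y k = x ∧ ∀ j, ∃ a < p, y j + a = p * y (j + 1) := by
  set c := (p : ZMod D)⁻¹
  have hc : (p : ZMod D) * c = 1 := ZMod.coe_mul_inv_eq_one p hpD
  set num : ℕ → ℕ := fun j => ((s : ZMod D) * c ^ j).val
  obtain ⟨w, hw⟩ := (isUnit_iff.mpr (norm_natCast_eq_one_iff.mpr hpD)).exists_right_inv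
  have hD : (D : ℤ_[p]) ≠ 0 := Nat.cast_ne_zero.mpr (NeZero.ne D)
  have hnum : ∀ j, (D : ℤ_[p]) * (num j * w) = num j := fun j => by
    rw [mul_left_comm, hw, mul_one]
  have hstep : ∀ j, ∃ a < p, (num j * w : ℤ_[p]) + a = p * (num (j + 1) * w) := by
    intro j
    have hmod : p * num (j + 1) ≡ num j [MOD D] := by
      rw [← ZMod.natCast_eq_natCast_iff]
      simp only [num, Nat.cast_mul, ZMod.natCast_val, ZMod.cast_id', id, pow_succ]
      linear_combination (s : ZMod D) * c ^ j * hc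
    obtain ⟨a, ha, hsa⟩ :=
      Nat.exists_lt_add_mul_eq_of_modEq hp.out.pos hmod (ZMod.val_lt _) (ZMod.val_lt _)
    refine ⟨a, ha, mul_left_cancel₀ hD ?_⟩
    rw [mul_add, hnum, mul_left_comm, hnum]
    have hsa' : ((num j + a * D : ℕ) : ℤ_[p]) = (p * num (j + 1) : ℕ) := congrArg _ hsa
    push_cast at hsa'
    linear_combination hsa'
  have hnum0 : num 0 * w = x := by
    refine mul_left_cancel₀ hD ?_
    rw [hnum, hx]
    simp only [num, pow_zero, mul_one, ZMod.val_cast_of_lt hs]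
  have hperiod : num k = num 0 := by
    have hck : c ^ k = 1 :=
      calc c ^ k = (p : ZMod D) ^ k * c ^ k := by rw [hk, one_mul]
        _ = 1 := by rw [← mul_pow, hc, one_pow]
    simp only [num, hck, pow_zero]
  exact ⟨fun j => num j * w, hnum0, by simp only [hperiod, hnum0], hstep⟩

theorem toZMod_multichoose_add_pow_mul_of_mul_eq {D s k : ℕ} [NeZero D] (hpD : p.Coprime D)
    (hk : (p : ZMod D) ^ k = 1) (hs : s < D) {x : ℤ_[p]} (hx : (D : ℤ_[p]) * x = s)
    {v : ℕ} (hv : v < p ^ k) (m : ℕ) :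
    toZMod (Ring.multichoose x (v + p ^ k * m)) =
      toZMod (Ring.multichoose x v) * toZMod (Ring.multichoose x m) := by
  obtain ⟨y, hy0, hyk, hy⟩ := exists_dwork_orbit hpD hk hs hx
  simpa only [hy0, hyk] using toZMod_multichoose_add_pow_mul hy k hv m

theorem norm_lt_one_of_toZMod_eq_zero {z : ℤ_[p]} (h : toZMod z = 0) : ‖z‖ < 1 := by
  have hz : z ∈ IsLocalRing.maximalIdeal ℤ_[p] := by rw [← ker_toZMod, RingHom.mem_ker, h]
  exact mem_nonunits.mp ((IsLocalRing.mem_maximalIdeal z).mp hz)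

theorem coe_multichoose_of_coe_eq {x : ℤ_[p]} {α : ℚ} (hx : (x : ℚ_[p]) = α) (n : ℕ) :
    ((Ring.multichoose x n : ℤ_[p]) : ℚ_[p]) =
      (((ascPochhammer ℚ n).eval α / n ! : ℚ) : ℚ_[p]) := by
  have h := congrArg (Coe.ringHom (p := p)) (Ring.factorial_mul_multichoose x n)
  rw [map_mul, map_natCast, RingHom.map_ascPochhammer_eval] at h
  rw [Rat.cast_div, Rat.cast_natCast, ← Rat.coe_castHom, RingHom.map_ascPochhammer_eval,
    Rat.coe_castHom, ← hx, eq_div_iff (Nat.cast_ne_zero.mpr n.factorial_ne_zero), mul_comm]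
  exact h

theorem coe_prod_multichoose {ι : Type*} [Fintype ι] {x : ι → ℤ_[p]} {α : ι → ℚ}
    (hx : ∀ i, (x i : ℚ_[p]) = α i) (n : ℕ) :
    ((∏ i, Ring.multichoose (x i) n : ℤ_[p]) : ℚ_[p]) =
      (((∏ i, (ascPochhammer ℚ n).eval (α i)) / (n ! : ℚ) ^ Fintype.card ι : ℚ) : ℚ_[p]) := by
  rw [← Finset.card_univ, ← Finset.prod_const, ← Finset.prod_div_distrib, Rat.cast_prod]
  exact (map_prod (Coe.ringHom (p := p)) _ _).trans
    (Finset.prod_congr rfl fun i _ => coe_multichoose_of_coe_eq (hx i) n)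

theorem exists_coe_eq_and_natCast_mul_eq {α : ℚ} {d : ℕ} [NeZero d] (h0 : 0 ≤ α) (h1 : α < 1)
    (hd : α.den ∣ d) (hpd : p.Coprime d) :
    ∃ x : ℤ_[p], (x : ℚ_[p]) = α ∧ ∃ s < d, (d : ℤ_[p]) * x = s := by
  obtain ⟨s, hs, hαs⟩ := Rat.exists_natCast_eq_mul_of_den_dvd h0 h1 hd (NeZero.ne d)
  have hαp : ‖(α : ℚ_[p])‖ ≤ 1 :=
    Padic.norm_rat_le_one ((Nat.Prime.coprime_iff_not_dvd hp.out).mp (hpd.coprime_dvd_right hd))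
  let x : ℤ_[p] := ⟨α, hαp⟩
  refine ⟨x, rfl, s, hs, PadicInt.ext ?_⟩
  rw [coe_mul, coe_natCast, coe_natCast, mul_comm]
  show (α : ℚ_[p]) * d = s
  exact_mod_cast hαs

end PadicInt

namespace Rat

variable {p : ℕ} [hp : Fact p.Prime]

theorem not_dvd_den_of_norm_le_one {y : ℚ} (h : ‖(y : ℚ_[p])‖ ≤ 1) : ¬ p ∣ y.den :=
  Rat.padicValuation_le_one_iff.mp ((Padic.norm_rat_le_one_iff_padicValuation_le_one p).mp h)

theorem exists_int_mul_eq_of_norm_le_one {y : ℚ} (h : ‖(y : ℚ_[p])‖ ≤ 1) :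
    ∃ a b : ℤ, ¬ (p : ℤ) ∣ b ∧ (b : ℚ) * y = a :=
  ⟨y.num, y.den, by exact_mod_cast not_dvd_den_of_norm_le_one h, by
    rw [mul_comm]; exact_mod_cast y.mul_den_eq_num⟩

theorem exists_int_mul_eq_of_norm_lt_one {y : ℚ} (h : ‖(y : ℚ_[p])‖ < 1) :
    ∃ a b : ℤ, (p : ℤ) ∣ a ∧ ¬ (p : ℤ) ∣ b ∧ (b : ℚ) * y = a := by
  obtain ⟨a, b, hb, hab⟩ := exists_int_mul_eq_of_norm_le_one h.le
  refine ⟨a, b, Padic.norm_intCast_lt_one_iff.mp ?_, hb, hab⟩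
  rw [← Rat.cast_intCast, ← hab, Rat.cast_mul, Rat.cast_intCast, norm_mul]
  calc ‖(b : ℚ_[p])‖ * ‖(y : ℚ_[p])‖ ≤ 1 * ‖(y : ℚ_[p])‖ := by
        gcongr; exact Padic.norm_int_le_one b
    _ < 1 := by rwa [one_mul]
end Rat

/-- Let `α₁,…,α_r ∈ ℚ ∩ (0,1)` with `d` the lcm of their denominators, and
`Q(n) = (α₁)ₙ⋯(α_r)ₙ/(n!)^r`. For every prime `p > d` there is a positive integer `k` such
that `Q` has the `p^k`-Lucas property: `Q(n) ∈ ℤ_(p)` for all `n`, and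
`Q(a + p^k·m) ≡ Q(a)·Q(m) mod p·ℤ_(p)` for all `0 ≤ a ≤ p^k − 1` and `m ∈ ℕ`. -/
theorem hypergeometric_pk_lucas
    (r : ℕ) (α : Fin r → ℚ) (hα : ∀ i, 0 < α i ∧ α i < 1)
    (d : ℕ) (hd : d = Finset.univ.lcm fun i => (α i).den)
    (Q : ℕ → ℚ)
    (hQ : Q = fun n => (∏ i, (ascPochhammer ℚ n).eval (α i)) / (Nat.factorial n : ℚ) ^ r) :
    ∀ p : ℕ, p.Prime → d < p →
      ∃ k : ℕ, 0 < k ∧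
        (∀ n : ℕ, ∃ a b : ℤ, ¬ (p : ℤ) ∣ b ∧ (b : ℚ) * Q n = (a : ℚ)) ∧
        ∀ v m : ℕ, v ≤ p ^ k - 1 →
          ∃ a b : ℤ, (p : ℤ) ∣ a ∧ ¬ (p : ℤ) ∣ b ∧
            (b : ℚ) * (Q (v + p ^ k * m) - Q v * Q m) = (a : ℚ) := by
  intro p hp hdp
  have := Fact.mk hp
  have hden : ∀ i, (α i).den ∣ d := fun i => hd ▸ Finset.dvd_lcm (Finset.mem_univ i)
  have : NeZero d := ⟨by simp [hd, Finset.lcm_eq_zero_iff]⟩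
  have hpd : p.Coprime d := (Nat.Prime.coprime_iff_not_dvd hp).mpr fun h =>
    (Nat.le_of_dvd (Nat.pos_of_ne_zero (NeZero.ne d)) h).not_gt hdp
  choose x hxα s hs hx using fun i =>
    PadicInt.exists_coe_eq_and_natCast_mul_eq (p := p) (hα i).1.le (hα i).2 (hden i) hpd
  have hQx : ∀ n, (Q n : ℚ_[p]) = ((∏ i, Ring.multichoose (x i) n : ℤ_[p]) : ℚ_[p]) := by
    intro n
    rw [PadicInt.coe_prod_multichoose hxα, hQ, Fintype.card_fin]
  set u := ZMod.unitOfCoprime p hpd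
  have hk : (p : ZMod d) ^ orderOf u = 1 := by
    rw [← ZMod.coe_unitOfCoprime p hpd, ← Units.val_pow_eq_pow_val, pow_orderOf_eq_one,
      Units.val_one]
  refine ⟨orderOf u, orderOf_pos u, fun n => ?_, fun v m hv => ?_⟩
  · exact Rat.exists_int_mul_eq_of_norm_le_one (hQx n ▸ PadicInt.norm_le_one _)
  · have hv' : v < p ^ orderOf u := by have := pow_pos hp.pos (orderOf u); omega
    apply Rat.exists_int_mul_eq_of_norm_lt_one
    rw [Rat.cast_sub, Rat.cast_mul, hQx, hQx, hQx, ← PadicInt.coe_mul, ← PadicInt.coe_sub]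
    refine PadicInt.norm_lt_one_of_toZMod_eq_zero ?_
    rw [map_sub, map_mul, map_prod, map_prod, map_prod, ← Finset.prod_mul_distrib, sub_eq_zero]
    exact Finset.prod_congr rfl fun i _ =>
      PadicInt.toZMod_multichoose_add_pow_mul_of_mul_eq hpd hk (hs i) (hx i) hv' m
end

section
/- Let e = (e_1,…,e_u) and f = (f_1,…,f_v) be tuples of positive integers with {e_1,…,e_u} ∩ {f_1,…,f_v} = ∅, satisfying Σ e_i = Σ f_j, and suppose that Δ_{e,f}(x) ≥ 1 for all real x with m_{e,f} ≤ x < 1, where m_{e,f} = 1/max{e_1,…,e_u,f_1,…,f_v}. Then the factorial ratio sequence Q_{e,f}(n) := Π_i (e_i n)! / Π_j (f_j n)! is integer-valued and satisfies the p-Lucas property for every prime p: Q_{e,f}(a + n·p) ≡ Q_{e,f}(a)·Q_{e,f}(n) mod p for all a ∈ {0,…,p−1} and n ∈ ℕ. -/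
open Finset

private lemma fact_add_prod (n : ℕ) : ∀ s : ℕ,
    (n + s).factorial = n.factorial * ∏ j ∈ Finset.Ico 1 (s + 1), (n + j)
  | 0 => by simp
  | s + 1 => by
    rw [Finset.prod_Ico_succ_top (by omega : 1 ≤ s + 1), ← mul_assoc, ← fact_add_prod n s,
      show n + (s + 1) = (n + s) + 1 by ring, Nat.factorial_succ]
    ring

private def Cfun (p N : ℕ) : ℕ := ∏ k ∈ Finset.range N, ∏ j ∈ Finset.Ico 1 p, (k * p + j)

private lemma fact_mul_p (p : ℕ) (hp : 0 < p) : ∀ N : ℕ,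
    (N * p).factorial = N.factorial * p ^ N * Cfun p N
  | 0 => by simp [Cfun]
  | N + 1 => by
    have h1 : (N + 1) * p = N * p + p := by ring
    rw [h1, fact_add_prod, fact_mul_p p hp N, Finset.prod_Ico_succ_top hp]
    simp only [Cfun, Finset.prod_range_succ]
    rw [Nat.factorial_succ, pow_succ]
    ring

private lemma prod_lin_cast (p : ℕ) [Fact p.Prime] (N r : ℕ) :
    ((∏ j ∈ Finset.Ico 1 (r + 1), (N * p + j) : ℕ) : ZMod p)
      = ((r.factorial : ℕ) : ZMod p) := by
  rw [← Finset.prod_Ico_id_eq_factorial r, Nat.cast_prod, Nat.cast_prod]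
  apply Finset.prod_congr rfl
  intro j _
  push_cast
  rw [ZMod.natCast_self]
  ring

private lemma Cfun_cast (p : ℕ) [hp : Fact p.Prime] : ∀ N : ℕ,
    ((Cfun p N : ℕ) : ZMod p) = (-1) ^ N
  | 0 => by simp [Cfun]
  | N + 1 => by
    rw [Cfun, Finset.prod_range_succ, Nat.cast_mul, ← Cfun, Cfun_cast p N]
    have hpp : (p - 1) + 1 = p := Nat.succ_pred_eq_of_pos hp.out.pos
    have h3 := prod_lin_cast p N (p - 1)
    rw [hpp] at h3
    rw [h3, ZMod.wilsons_lemma, pow_succ]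

private lemma legendre_prod {w : ℕ} (g : Fin w → ℕ) (N b p : ℕ) (hp : p.Prime)
    (hb : ∀ i, Nat.log p (g i * N) < b) :
    (∏ i, (g i * N).factorial).factorization p
      = ∑ k ∈ Finset.Ico 1 b, ∑ i, g i * N / p ^ k := by
  haveI : Fact p.Prime := ⟨hp⟩
  rw [Nat.factorization_prod (fun i _ => (Nat.factorial_pos _).ne')]
  rw [Finsupp.finset_sum_apply]
  rw [Finset.sum_comm]
  apply Finset.sum_congr rfl
  intro i _
  rw [Nat.factorization_def _ hp, padicValNat_factorial (hb i)]

/-- Let `e = (e₁,…,e_u)` and `f = (f₁,…,f_v)` be disjoint tuples of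
positive integers with `∑ eᵢ = ∑ fⱼ` and `Δ_{e,f}(x) = ∑⌊eᵢx⌋ − ∑⌊fⱼx⌋ ≥ 1` for all
`x ∈ [m_{e,f}, 1)` where `m_{e,f} = 1/max{eᵢ, fⱼ}`. Then `Q_{e,f}(n) = ∏(eᵢn)!/∏(fⱼn)!` is
integer-valued and satisfies the `p`-Lucas property for every prime `p`. -/
theorem factorial_ratio_p_lucas
    (u v : ℕ) (e : Fin u → ℕ) (f : Fin v → ℕ)
    (he : ∀ i, 0 < e i) (hf : ∀ j, 0 < f j)
    (hdisj : ∀ i j, e i ≠ f j)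
    (hbal : ∑ i, e i = ∑ j, f j)
    (M : ℕ) (hM : M = (Finset.univ.sup e) ⊔ (Finset.univ.sup f))
    (hΔ : ∀ x : ℝ, ((M : ℝ))⁻¹ ≤ x → x < 1 →
      1 ≤ (∑ i, ⌊(e i : ℝ) * x⌋) - ∑ j, ⌊(f j : ℝ) * x⌋)
    (Q : ℕ → ℚ)
    (hQ : Q = fun n =>
      (∏ i, (Nat.factorial (e i * n) : ℚ)) / ∏ j, (Nat.factorial (f j * n) : ℚ)) :
    ∃ QZ : ℕ → ℤ, (∀ n, (QZ n : ℚ) = Q n) ∧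
      ∀ p : ℕ, p.Prime → ∀ a n : ℕ, a < p →
        QZ (a + n * p) ≡ QZ a * QZ n [ZMOD (p : ℤ)] := by
  have heM : ∀ i, e i ≤ M := fun i =>
    hM ▸ le_trans (Finset.le_sup (Finset.mem_univ i)) le_sup_left
  have hfM : ∀ j, f j ≤ M := fun j =>
    hM ▸ le_trans (Finset.le_sup (Finset.mem_univ j)) le_sup_right
  have hM1 : 1 ≤ M := by
    by_contra h
    have hM0 : M = 0 := by omega
    have h2 := hΔ (1/2) (by simp [hM0]) (by norm_num)
    rw [Finset.sum_eq_zero (fun i _ => absurd (he i) (by have := heM i; omega)),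
      Finset.sum_eq_zero (fun j _ => absurd (hf j) (by have := hfM j; omega))] at h2
    omega
  -- key elementary inequality coming from hΔ
  have key : ∀ r m : ℕ, 0 < m → r < m → m ≤ M * r →
      (∑ j, f j * r / m) + 1 ≤ ∑ i, e i * r / m := by
    intro r m hm hrm hMr
    have hm' : (0:ℝ) < m := by exact_mod_cast hm
    have hMpos : (0:ℝ) < M := by exact_mod_cast hM1
    have hx1 : (r:ℝ)/(m:ℝ) < 1 := by rw [div_lt_one hm']; exact_mod_cast hrm
    have hx0 : ((M:ℝ))⁻¹ ≤ (r:ℝ)/(m:ℝ) := by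
      rw [inv_eq_one_div, div_le_div_iff₀ hMpos hm']
      have : (m:ℝ) ≤ (M:ℝ) * (r:ℝ) := by exact_mod_cast hMr
      linarith
    have h2 := hΔ _ hx0 hx1
    have hfl : ∀ a : ℕ, ⌊(a : ℝ) * ((r:ℝ)/(m:ℝ))⌋ = ((a * r / m : ℕ) : ℤ) := by
      intro a
      have hx : (a:ℝ) * ((r:ℝ)/(m:ℝ)) = ((a * r : ℕ) : ℝ) / ((m : ℕ) : ℝ) := by
        push_cast; ring
      rw [hx, ← Int.natCast_floor_eq_floor (by positivity), Nat.floor_div_eq_div]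
    simp only [hfl] at h2
    rw [← Nat.cast_sum, ← Nat.cast_sum] at h2
    omega
  -- splitting divisions by the base
  have hdivsplit : ∀ n m : ℕ, 0 < m → ∀ a : ℕ, a * n / m = a * (n / m) + a * (n % m) / m := by
    intro n m hm a
    have h : a * n = m * (a * (n / m)) + a * (n % m) := by
      conv_lhs => rw [show n = m * (n / m) + n % m from (Nat.div_add_mod n m).symm]
      ring
    rw [h, Nat.mul_add_div hm]
  have nonneg : ∀ n m : ℕ, 0 < m → ∑ j, f j * n / m ≤ ∑ i, e i * n / m := by
    intro n m hm
    have hcomp : ∑ j, f j * (n % m) / m ≤ ∑ i, e i * (n % m) / m := by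
      rcases lt_or_ge (M * (n % m)) m with h | h
      · rw [Finset.sum_eq_zero, Finset.sum_eq_zero]
        · intro i _
          exact Nat.div_eq_of_lt (lt_of_le_of_lt (Nat.mul_le_mul_right _ (heM i)) h)
        · intro j _
          exact Nat.div_eq_of_lt (lt_of_le_of_lt (Nat.mul_le_mul_right _ (hfM j)) h)
      · have := key (n % m) m hm (Nat.mod_lt _ hm) h
        omega
    simp only [hdivsplit n m hm]
    rw [Finset.sum_add_distrib, Finset.sum_add_distrib, ← Finset.sum_mul, ← Finset.sum_mul, hbal]
    omega
  have strict : ∀ n m : ℕ, 0 < m → m ≤ M * (n % m) →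
      (∑ j, f j * n / m) + 1 ≤ ∑ i, e i * n / m := by
    intro n m hm hMn
    have hcomp := key (n % m) m hm (Nat.mod_lt _ hm) hMn
    simp only [hdivsplit n m hm]
    rw [Finset.sum_add_distrib, Finset.sum_add_distrib, ← Finset.sum_mul, ← Finset.sum_mul, hbal]
    omega
  -- divisibility (integrality)
  have hdvd : ∀ n : ℕ, (∏ j, (f j * n).factorial) ∣ ∏ i, (e i * n).factorial := by
    intro n
    rw [← Nat.factorization_le_iff_dvd (by positivity) (by positivity), Finsupp.le_def]
    intro p
    by_cases hp : p.Prime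
    · have hbE : ∀ i, Nat.log p (e i * n) < M * n + 1 := fun i =>
        lt_of_le_of_lt (le_trans (Nat.log_le_self _ _) (Nat.mul_le_mul_right _ (heM i)))
          (Nat.lt_succ_self _)
      have hbF : ∀ j, Nat.log p (f j * n) < M * n + 1 := fun j =>
        lt_of_le_of_lt (le_trans (Nat.log_le_self _ _) (Nat.mul_le_mul_right _ (hfM j)))
          (Nat.lt_succ_self _)
      rw [legendre_prod e n (M * n + 1) p hp hbE, legendre_prod f n (M * n + 1) p hp hbF]
      exact Finset.sum_le_sum fun k _ => nonneg n (p ^ k) (pow_pos hp.pos k)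
    · rw [Nat.factorization_eq_zero_of_not_prime _ hp, Nat.factorization_eq_zero_of_not_prime _ hp]
  set QZ : ℕ → ℕ := fun n => (∏ i, (e i * n).factorial) / ∏ j, (f j * n).factorial with hQZdef
  have hQZ : ∀ n, QZ n * (∏ j, (f j * n).factorial) = ∏ i, (e i * n).factorial :=
    fun n => Nat.div_mul_cancel (hdvd n)
  refine ⟨fun n => (QZ n : ℤ), fun n => ?_, ?_⟩
  · rw [hQ, eq_div_iff (by positivity)]
    push_cast
    exact_mod_cast hQZ n
  intro p hp a n hap
  haveI : Fact p.Prime := ⟨hp⟩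
  rw [← ZMod.intCast_eq_intCast_iff]
  push_cast
  rcases lt_or_ge (M * a) p with hcase | hcase
  · -- no-carry case
    have hea : ∀ i, e i * a < p := fun i =>
      lt_of_le_of_lt (Nat.mul_le_mul_right _ (heM i)) hcase
    have hfa : ∀ j, f j * a < p := fun j =>
      lt_of_le_of_lt (Nat.mul_le_mul_right _ (hfM j)) hcase
    have hKey : ∀ N r : ℕ, (N * p + r).factorial
        = N.factorial * p ^ N * (Cfun p N * ∏ j ∈ Finset.Ico 1 (r + 1), (N * p + j)) := by
      intro N r
      rw [fact_add_prod, fact_mul_p p hp.pos]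
      ring
    set t := ∑ i, e i * n with ht
    have hts : ∑ j, f j * n = t := by
      rw [ht, ← Finset.sum_mul, ← Finset.sum_mul, hbal]
    set UA : ℕ := ∏ i, (Cfun p (e i * n) * ∏ j ∈ Finset.Ico 1 (e i * a + 1), ((e i * n) * p + j))
      with hUAdef
    set UB : ℕ := ∏ j, (Cfun p (f j * n) * ∏ k ∈ Finset.Ico 1 (f j * a + 1), ((f j * n) * p + k))
      with hUBdef
    have hA : ∏ i, (e i * (a + n * p)).factorial
        = (∏ i, (e i * n).factorial) * p ^ t * UA := by
      rw [ht, hUAdef, ← Finset.prod_pow_eq_pow_sum, ← Finset.prod_mul_distrib,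
        ← Finset.prod_mul_distrib]
      apply Finset.prod_congr rfl
      intro i _
      rw [show e i * (a + n * p) = (e i * n) * p + e i * a by ring, hKey]
    have hB : ∏ j, (f j * (a + n * p)).factorial
        = (∏ j, (f j * n).factorial) * p ^ t * UB := by
      rw [← hts, hUBdef, ← Finset.prod_pow_eq_pow_sum, ← Finset.prod_mul_distrib,
        ← Finset.prod_mul_distrib]
      apply Finset.prod_congr rfl
      intro j _
      rw [show f j * (a + n * p) = (f j * n) * p + f j * a by ring, hKey]
    -- exact integer identity
    have hmain : (QZ (a + n * p) : ℤ) * (UB : ℤ) = (QZ n : ℤ) * (UA : ℤ) := by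
      have h1 := hQZ (a + n * p)
      rw [hB, hA, ← hQZ n] at h1
      have h1' : ((QZ (a + n * p) * ((∏ j, (f j * n).factorial) * p ^ t * UB) : ℕ) : ℤ)
          = ((QZ n * (∏ j, (f j * n).factorial) * p ^ t * UA : ℕ) : ℤ) := by
        exact_mod_cast congrArg (Nat.cast : ℕ → ℤ) h1
      push_cast at h1'
      have hB0 : (∏ j, ((f j * n).factorial : ℤ)) * (p : ℤ) ^ t ≠ 0 := by
        refine (mul_pos (Finset.prod_pos fun j _ => ?_) (pow_pos ?_ t)).ne'
        · exact_mod_cast Nat.factorial_pos _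
        · exact_mod_cast hp.pos
      apply mul_right_cancel₀ hB0
      linear_combination h1'
    have h2 : ((QZ (a + n * p) : ℕ) : ZMod p) * ((UB : ℕ) : ZMod p)
        = ((QZ n : ℕ) : ZMod p) * ((UA : ℕ) : ZMod p) := by
      exact_mod_cast congrArg (fun z : ℤ => (z : ZMod p)) hmain
    have hUA' : ((UA : ℕ) : ZMod p)
        = (-1) ^ t * ((∏ i, (e i * a).factorial : ℕ) : ZMod p) := by
      rw [hUAdef, Nat.cast_prod, Nat.cast_prod, ht, ← Finset.prod_pow_eq_pow_sum,
        ← Finset.prod_mul_distrib]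
      apply Finset.prod_congr rfl
      intro i _
      rw [Nat.cast_mul, Cfun_cast, prod_lin_cast]
    have hUB' : ((UB : ℕ) : ZMod p)
        = (-1) ^ t * ((∏ j, (f j * a).factorial : ℕ) : ZMod p) := by
      rw [hUBdef, Nat.cast_prod, Nat.cast_prod, ← hts, ← Finset.prod_pow_eq_pow_sum,
        ← Finset.prod_mul_distrib]
      apply Finset.prod_congr rfl
      intro j _
      rw [Nat.cast_mul, Cfun_cast, prod_lin_cast]
    have hEa : ((QZ a : ℕ) : ZMod p) * ((∏ j, (f j * a).factorial : ℕ) : ZMod p)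
        = ((∏ i, (e i * a).factorial : ℕ) : ZMod p) := by
      exact_mod_cast congrArg (Nat.cast : ℕ → ZMod p) (hQZ a)
    rw [hUA', hUB', ← hEa] at h2
    have hFa : ((∏ j, (f j * a).factorial : ℕ) : ZMod p) ≠ 0 := by
      rw [Nat.cast_prod]
      apply Finset.prod_ne_zero_iff.mpr
      intro j _
      rw [Ne, ZMod.natCast_eq_zero_iff, hp.dvd_factorial]
      exact Nat.not_le.mpr (hfa j)
    apply mul_right_cancel₀
      (mul_ne_zero (pow_ne_zero t (neg_ne_zero.mpr (one_ne_zero))) hFa)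
    linear_combination h2
  · -- carry case: both sides are divisible by p
    have hdvdP : ∀ N : ℕ, 0 < N → p ≤ M * (N % p) → p ∣ QZ N := by
      intro N hN0 hN
      suffices hd : (∏ j, (f j * N).factorial) * p ∣ ∏ i, (e i * N).factorial by
        rcases hd with ⟨c, hc⟩
        refine ⟨c, ?_⟩
        have h3 := hQZ N
        rw [hc] at h3
        have hF : 0 < ∏ j, (f j * N).factorial := by positivity
        apply Nat.eq_of_mul_eq_mul_left hF
        calc (∏ j, (f j * N).factorial) * QZ N
            = QZ N * (∏ j, (f j * N).factorial) := by ring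
          _ = (∏ j, (f j * N).factorial) * p * c := h3
          _ = (∏ j, (f j * N).factorial) * (p * c) := by ring
      rw [← Nat.factorization_le_iff_dvd (Nat.mul_pos (by positivity) hp.pos).ne'
        (by positivity), Finsupp.le_def]
      intro q
      have hbE : ∀ i, Nat.log q (e i * N) < M * N + 1 := fun i =>
        lt_of_le_of_lt (le_trans (Nat.log_le_self _ _) (Nat.mul_le_mul_right _ (heM i)))
          (Nat.lt_succ_self _)
      have hbF : ∀ j, Nat.log q (f j * N) < M * N + 1 := fun j =>
        lt_of_le_of_lt (le_trans (Nat.log_le_self _ _) (Nat.mul_le_mul_right _ (hfM j)))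
          (Nat.lt_succ_self _)
      rw [Nat.factorization_mul (by positivity) hp.pos.ne', Finsupp.add_apply]
      rcases eq_or_ne q p with rfl | hqp
      · rw [hp.factorization, Finsupp.single_eq_same]
        rw [legendre_prod e N (M * N + 1) q hp hbE, legendre_prod f N (M * N + 1) q hp hbF]
        have h1b : 1 < M * N + 1 := by
          have : 0 < M * N := Nat.mul_pos (by omega) hN0
          omega
        rw [Finset.sum_eq_sum_Ico_succ_bot h1b, Finset.sum_eq_sum_Ico_succ_bot h1b]
        simp only [pow_one]
        have hk1 := strict N q hp.pos hN
        have hrest : ∑ k ∈ Finset.Ico (1 + 1) (M * N + 1), ∑ j, f j * N / q ^ k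
            ≤ ∑ k ∈ Finset.Ico (1 + 1) (M * N + 1), ∑ i, e i * N / q ^ k :=
          Finset.sum_le_sum fun k _ => nonneg N (q ^ k) (pow_pos hp.pos k)
        omega
      · rw [hp.factorization, Finsupp.single_apply, if_neg (fun h => hqp h.symm)]
        by_cases hq : q.Prime
        · rw [legendre_prod e N (M * N + 1) q hq hbE, legendre_prod f N (M * N + 1) q hq hbF]
          have h : ∑ k ∈ Finset.Ico 1 (M * N + 1), ∑ j, f j * N / q ^ k
              ≤ ∑ k ∈ Finset.Ico 1 (M * N + 1), ∑ i, e i * N / q ^ k :=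
            Finset.sum_le_sum fun k _ => nonneg N (q ^ k) (pow_pos hq.pos k)
          omega
        · rw [Nat.factorization_eq_zero_of_not_prime _ hq,
            Nat.factorization_eq_zero_of_not_prime _ hq]
          omega
    have ha0 : 0 < a := by
      rcases Nat.eq_zero_or_pos a with rfl | h
      · simp at hcase; omega
      · exact h
    have d1 : p ∣ QZ a := hdvdP a ha0 (by rwa [Nat.mod_eq_of_lt hap])
    have d2 : p ∣ QZ (a + n * p) := by
      apply hdvdP _ (by omega)
      rwa [Nat.add_mul_mod_self_right, Nat.mod_eq_of_lt hap]
    rw [(ZMod.natCast_eq_zero_iff _ _).mpr d2,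
      (ZMod.natCast_eq_zero_iff _ _).mpr d1, zero_mul]
end
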